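/- Let m_0, p be positive integers and let G be a graph such that G →v (a_1,...,a_s) for every tuple of positive integers a_1,...,a_s with Σ(a_i−1)+1 = m_0 and max a_i ≤ p (written G →v [m_0]^p). Then for every m ≥ m_0, the join K_{m−m_0} + G satisfies K_{m−m_0} + G →v [m]^p. -/

import Mathlib

open SimpleGraph

/-- `VArrows G a` : for every coloring of the vertices of `G` with `a.length` colors,
some color class `i` contains a clique of size `a.get i`. -/
def VArrows {V : Type} [Fintype V] (G : SimpleGraph V) (a : List ℕ) : Prop :=
  ∀ c : V → Fin a.length, ∃ i : Fin a.length, ∃ S : Finset V,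
    (∀ v ∈ S, c v = i) ∧ G.IsNClique (a.get i) S

/-- `G →v [m]^p` : `G` arrows every tuple of positive integers with
`Σ(a_i - 1) + 1 = m` and all entries at most `p`. -/
def VArrowsUni (m p : ℕ) {V : Type} [Fintype V] (G : SimpleGraph V) : Prop :=
  ∀ a : List ℕ, a ≠ [] → (∀ x ∈ a, 0 < x) → (a.map (· - 1)).sum + 1 = m →
    (∀ x ∈ a, x ≤ p) → VArrows G a

/-- The join of two graphs: all cross edges are present. -/
def joinG {V W : Type} (G : SimpleGraph V) (H : SimpleGraph W) : SimpleGraph (V ⊕ W) where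
  Adj x y := match x, y with
    | .inl a, .inl b => G.Adj a b
    | .inr a, .inr b => H.Adj a b
    | .inl _, .inr _ => True
    | .inr _, .inl _ => True
  symm := by refine ⟨?_⟩; rintro (a|a) (b|b) h
             · exact h.symm
             · trivial
             · trivial
             · exact h.symm
  loopless := by refine ⟨?_⟩; rintro (a|a) h
                 · exact G.loopless.irrefl a h
                 · exact H.loopless.irrefl a h

/-!
Colour the vertices of `K_{m-m₀} + G` and let `k i` be the number of vertices of colour `i` in
the complete part. If `a i ≤ k i` for some `i`, those vertices already contain a monochromatic
`a i`-clique. Otherwise the tuple `(a i - k i)` consists of positive integers at most `p` with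
`Σ (a i - k i - 1) + 1 = m - (m - m₀) = m₀`, so `G` has a monochromatic `(a i - k i)`-clique
of some colour `i`; since every vertex of the complete part is joined to all of `G`, adding the
`k i` vertices of colour `i` there gives an `a i`-clique.
-/

open Finset

theorem SimpleGraph.IsNClique.joinG_disjSum {V W : Type} {G : SimpleGraph V} {H : SimpleGraph W}
    {a b : ℕ} {s : Finset V} {t : Finset W} (hs : G.IsNClique a s) (ht : H.IsNClique b t) :
    (joinG G H).IsNClique (a + b) (s.disjSum t) := by
  refine ⟨?_, by rw [card_disjSum, hs.card_eq, ht.card_eq]⟩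
  rintro (x | x) hx (y | y) hy hxy <;>
    simp only [mem_coe, inl_mem_disjSum, inr_mem_disjSum] at hx hy
  · exact hs.isClique hx hy fun h => hxy (congrArg Sum.inl h)
  · trivial
  · trivial
  · exact ht.isClique hx hy fun h => hxy (congrArg Sum.inr h)

theorem varrows_ofFn_iff {V : Type} [Fintype V] (G : SimpleGraph V) {n : ℕ} (f : Fin n → ℕ) :
    VArrows G (List.ofFn f) ↔
      ∀ c : V → Fin n, ∃ i, ∃ S : Finset V, (∀ v ∈ S, c v = i) ∧ G.IsNClique (f i) S := by
  have hlen : (List.ofFn f).length = n := List.length_ofFn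
  constructor
  · intro h c
    obtain ⟨i, S, hS, hclique⟩ := h (Fin.cast hlen.symm ∘ c)
    refine ⟨Fin.cast hlen i, S, fun v hv => ?_, by rwa [List.get_ofFn] at hclique⟩
    simp [← hS v hv]
  · intro h c
    obtain ⟨i, S, hS, hclique⟩ := h (Fin.cast hlen ∘ c)
    refine ⟨Fin.cast hlen.symm i, S, fun v hv => ?_, by rwa [List.get_ofFn]⟩
    simp [← hS v hv]

theorem varrows_joinG_top {V W : Type} [Fintype V] [Fintype W] (G : SimpleGraph V) (a : List ℕ)
    (h : ∀ k : Fin a.length → ℕ, ∑ i, k i = Fintype.card W → (∀ i, k i < a.get i) →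
      VArrows G (List.ofFn fun i => a.get i - k i)) :
    VArrows (joinG (⊤ : SimpleGraph W) G) a := by
  classical
  intro c
  set fiber : Fin a.length → Finset W := fun i => {w | c (Sum.inl w) = i}
  have hfiber : ∀ i, ∀ x ∈ (fiber i).disjSum (∅ : Finset V), c x = i := by
    rintro i (w | v) hx <;> simp_all [fiber]
  have htop : ∀ T : Finset W, (⊤ : SimpleGraph W).IsNClique #T T := fun T => ⟨IsClique.top _, rfl⟩
  by_cases hbig : ∃ i, a.get i ≤ #(fiber i)
  · obtain ⟨i, hi⟩ := hbig
    obtain ⟨T, hT, hTcard⟩ := exists_subset_card_eq hi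
    refine ⟨i, T.disjSum ∅, fun x hx => hfiber i x (disjSum_mono hT subset_rfl hx), ?_⟩
    exact (hTcard ▸ htop T).joinG_disjSum (isNClique_empty.mpr rfl)
  · push Not at hbig
    have hsum : ∑ i, #(fiber i) = Fintype.card W :=
      (card_eq_sum_card_fiberwise fun w _ => mem_univ (c (Sum.inl w))).symm
    obtain ⟨i, S, hS, hclique⟩ :=
      (varrows_ofFn_iff G _).mp (h _ hsum hbig) (c ∘ Sum.inr)
    refine ⟨i, (fiber i).disjSum S, ?_, ?_⟩
    · rintro (w | v) hx
      · exact hfiber i _ (by simpa using hx)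
      · exact hS v (by simpa using hx)
    · have := (htop (fiber i)).joinG_disjSum hclique
      rwa [Nat.add_sub_cancel' (hbig i).le] at this

theorem sum_map_sub_one_ofFn_sub (a : List ℕ) (k : Fin a.length → ℕ) (hk : ∀ i, k i < a.get i) :
    ((List.ofFn fun i => a.get i - k i).map (· - 1)).sum + ∑ i, k i = (a.map (· - 1)).sum := by
  rw [List.map_ofFn, List.sum_ofFn, ← sum_add_distrib, ← Fin.sum_univ_fun_getElem]
  refine sum_congr rfl fun i _ => ?_
  have := hk i
  simp only [Function.comp_apply, List.get_eq_getElem] at this ⊢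
  omega

theorem join_uni_general (m₀ p m : ℕ) (hm : m₀ ≤ m)
    {V : Type} [Fintype V] (G : SimpleGraph V) (hG : VArrowsUni m₀ p G) :
    VArrowsUni m p (joinG (⊤ : SimpleGraph (Fin (m - m₀))) G) := by
  intro a hne _ hsum hle
  refine varrows_joinG_top G a fun k hk hlt => hG _ ?_ ?_ ?_ ?_
  · simpa [List.ofFn_eq_nil_iff] using hne
  · simp only [List.mem_ofFn, forall_exists_index, forall_apply_eq_imp_iff]
    exact fun i => Nat.sub_pos_of_lt (hlt i)
  · have := sum_map_sub_one_ofFn_sub a k hlt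
    rw [Fintype.card_fin] at hk
    omega
  · simp only [List.mem_ofFn, forall_exists_index, forall_apply_eq_imp_iff]
    exact fun i => (Nat.sub_le _ _).trans (hle _ (List.get_mem a i))

theorem join_uni (m₀ p m : ℕ) (h₀ : 0 < m₀) (hp : 0 < p) (hm : m₀ ≤ m)
    {V : Type} [Fintype V] (G : SimpleGraph V) (hG : VArrowsUni m₀ p G) :
    VArrowsUni m p (joinG (⊤ : SimpleGraph (Fin (m - m₀))) G) :=
  join_uni_general m₀ p m hm G hG
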